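/- arXiv:1903.08922 — 2 statements merged into one kernel-verified Lean document; each statement's English description precedes it below -/
import Mathlib

section
/- Let (L₁, L₂, P, (⊛ᵢ, ↙ⁱ, ↖ᵢ)_{i∈I}) be a multi-adjoint property-oriented frame, (X, Y, φ, τ) a context of this frame, and φ*, φ_* the associated operators. Then φ_* ∘ φ* is a closure operator on Y → L₂ (monotone, λ ≤ φ_*(φ* λ), idempotent), and the set Fix(φ_*∘φ*) = { λ : Y → L₂ ∣ φ_*(φ* λ) = λ }, ordered pointwise, is a complete lattice in which the infimum of a family (λⱼ)_{j∈J} is the pointwise infimum ⨅ⱼ λⱼ and the supremum is φ_*(φ*(⨆ⱼ λⱼ)). -/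
/-!
Each adjoint triple gives `w i z y ≤ x ↔ y ≤ lu i x z`; taking suprema over `Y` on one side and
infima over `X` on the other, `φ*` and `φ_*` form a (monotone) Galois connection between
`Y → L₂` and `X → L₁`. Hence `φ_* ∘ φ*` is a closure operator, and the closed elements of a
closure operator on a complete lattice are closed under arbitrary infima, with the closure of the
supremum as the least closed upper bound.
-/

theorem galoisConnection_iSup_iInf_of_adjoint {L₁ L₂ P I X Y : Type*} [CompleteLattice L₁]
    [CompleteLattice L₂] (w : I → P → L₂ → L₁) (lu : I → L₁ → P → L₂)
    (adj : ∀ i z y x, w i z y ≤ x ↔ y ≤ lu i x z) (φ : X → Y → P) (τ : Y → I) :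
    GaloisConnection (fun (lam : Y → L₂) x => ⨆ y, w (τ y) (φ x y) (lam y))
      (fun (μ : X → L₁) y => ⨅ x, lu (τ y) (μ x) (φ x y)) := by
  intro lam μ
  simp only [Pi.le_def, iSup_le_iff, le_iInf_iff, adj]
  exact forall_comm

theorem ClosureOperator.iInf_isClosed {α ι : Type*} [CompleteLattice α] {c : ClosureOperator α}
    {f : ι → α} (hf : ∀ i, c.IsClosed (f i)) : c.IsClosed (⨅ i, f i) := by
  rw [← sInf_range]
  exact sInf_isClosed (Set.forall_mem_range.2 hf)

/-- `φ_* ∘ φ*` is a closure operator on `Y → L₂`, and its fixed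
points form a complete lattice with pointwise infima and with suprema given by
the closure of the pointwise supremum. -/
theorem stmt_11 {L₁ L₂ P : Type*} [CompleteLattice L₁] [CompleteLattice L₂]
    [CompleteLattice P] {I : Type*}
    (w : I → P → L₂ → L₁) (ld : I → L₁ → L₂ → P) (lu : I → L₁ → P → L₂)
    (adj : ∀ (i : I) (z : P) (y : L₂) (x : L₁),
      (w i z y ≤ x ↔ z ≤ ld i x y) ∧ (w i z y ≤ x ↔ y ≤ lu i x z))
    {X Y : Type*} (φ : X → Y → P) (τ : Y → I)
    (star : (Y → L₂) → X → L₁) (lstar : (X → L₁) → Y → L₂)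
    (hstar : ∀ (lam : Y → L₂) (x : X), star lam x = ⨆ y, w (τ y) (φ x y) (lam y))
    (hlstar : ∀ (μ : X → L₁) (y : Y), lstar μ y = ⨅ x, lu (τ y) (μ x) (φ x y))
    {J : Type*} (lam : J → Y → L₂) (hlam : ∀ j, lstar (star (lam j)) = lam j) :
    -- `φ_* ∘ φ*` is a closure operator
    (∀ lam₁ lam₂ : Y → L₂, lam₁ ≤ lam₂ → lstar (star lam₁) ≤ lstar (star lam₂)) ∧
    (∀ lam₀ : Y → L₂, lam₀ ≤ lstar (star lam₀)) ∧
    (∀ lam₀ : Y → L₂, lstar (star (lstar (star lam₀))) = lstar (star lam₀)) ∧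
    -- the pointwise infimum of fixed points is a fixed point ...
    lstar (star (⨅ j, lam j)) = ⨅ j, lam j ∧
    -- ... and is the greatest lower bound of the family among fixed points
    (∀ j, (⨅ j, lam j) ≤ lam j) ∧
    (∀ ν : Y → L₂, lstar (star ν) = ν → (∀ j, ν ≤ lam j) → ν ≤ ⨅ j, lam j) ∧
    -- the closure of the pointwise supremum is a fixed point ...
    lstar (star (lstar (star (⨆ j, lam j)))) = lstar (star (⨆ j, lam j)) ∧
    -- ... and is the least upper bound of the family among fixed points
    (∀ j, lam j ≤ lstar (star (⨆ j, lam j))) ∧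
    (∀ ν : Y → L₂, lstar (star ν) = ν → (∀ j, lam j ≤ ν) →
      lstar (star (⨆ j, lam j)) ≤ ν) := by
  have hgc : GaloisConnection star lstar := by
    obtain rfl : star = _ := funext₂ hstar
    obtain rfl : lstar = _ := funext₂ hlstar
    exact galoisConnection_iSup_iInf_of_adjoint w lu (fun i z y x => (adj i z y x).2) φ τ
  let c := hgc.closureOperator
  have hclosed : ∀ j, c.IsClosed (lam j) := fun j => c.isClosed_iff.2 (hlam j)
  refine ⟨fun _ _ h => c.monotone h, c.le_closure, c.idempotent,
    (ClosureOperator.iInf_isClosed hclosed).closure_eq, iInf_le lam, fun _ _ => le_iInf,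
    c.idempotent _, fun j => (le_iSup lam j).trans (c.le_closure _), fun _ hν h =>
    c.closure_min (iSup_le h) (c.isClosed_iff.2 hν)⟩
end

section
/- Let (L₁, L₂, P, (⊛ᵢ, ↙ⁱ, ↖ᵢ)_{i∈I}) be a multi-adjoint object-oriented frame and (X, Y, φ, τ) a context of this frame. Define φ† : (X → L₁) → (Y → L₂) by (φ† μ)(y) = ⨆_{x∈X} μ(x) ⊛_{τ(y)} φ(x,y), and φ_† : (Y → L₂) → (X → L₁) by (φ_† λ)(x) = ⨅_{y∈Y} λ(y) ↙^{τ(y)} φ(x,y). Then (φ†, φ_†) is a (covariant) Galois connection: for all μ : X → L₁ and λ : Y → L₂, φ† μ ≤ λ (pointwise in L₂) if and only if μ ≤ φ_† λ (pointwise in L₁). -/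
/-! Each adjoint triple gives, for fixed second argument, a Galois connection `(· ⊛ᵢ z) ⊣ (· ↙ⁱ z)`.
Both `φ† μ ≤ λ` and `μ ≤ φ_† λ` unfold to the same family of inequalities indexed by `(x, y)`,
one side via `iSup_le_iff` and the other via `le_iInf_iff`. -/

theorem galoisConnection_iSup_iInf {X Y : Type*} {α : X → Type*} {β : Y → Type*}
    [∀ x, CompleteLattice (α x)] [∀ y, CompleteLattice (β y)]
    (f : ∀ x y, α x → β y) (g : ∀ x y, β y → α x) (h : ∀ x y, GaloisConnection (f x y) (g x y)) :
    GaloisConnection (fun μ y => ⨆ x, f x y (μ x)) (fun lam x => ⨅ y, g x y (lam y)) := by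
  intro μ lam
  simp only [Pi.le_def, iSup_le_iff, le_iInf_iff, (h _ _).le_iff_le]
  exact forall_comm

/-- For a context of a multi-adjoint object-oriented frame, the
operators `φ†` and `φ_†` form a (covariant) Galois connection. -/
theorem stmt_14 {L₁ L₂ P : Type*} [CompleteLattice L₁] [CompleteLattice L₂]
    [CompleteLattice P] {I : Type*}
    (w : I → L₁ → P → L₂) (ld : I → L₂ → P → L₁) (lu : I → L₂ → L₁ → P)
    (adj : ∀ (i : I) (x : L₁) (z : P) (y : L₂),
      (w i x z ≤ y ↔ x ≤ ld i y z) ∧ (w i x z ≤ y ↔ z ≤ lu i y x))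
    {X Y : Type*} (φ : X → Y → P) (τ : Y → I)
    (dag : (X → L₁) → Y → L₂) (ldag : (Y → L₂) → X → L₁)
    (hdag : ∀ (μ : X → L₁) (y : Y), dag μ y = ⨆ x, w (τ y) (μ x) (φ x y))
    (hldag : ∀ (lam : Y → L₂) (x : X), ldag lam x = ⨅ y, ld (τ y) (lam y) (φ x y)) :
    ∀ (μ : X → L₁) (lam : Y → L₂), dag μ ≤ lam ↔ μ ≤ ldag lam := by
  obtain rfl : dag = fun μ y => ⨆ x, w (τ y) (μ x) (φ x y) := funext fun μ => funext (hdag μ)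
  obtain rfl : ldag = fun lam x => ⨅ y, ld (τ y) (lam y) (φ x y) :=
    funext fun lam => funext (hldag lam)
  exact galoisConnection_iSup_iInf (fun x y a => w (τ y) a (φ x y))
    (fun x y b => ld (τ y) b (φ x y)) fun x y a b => (adj (τ y) a (φ x y) b).1
end
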